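/- The algorithm pu eliminates all unknown primitives: for any rule (m, a) with a ∈ {Accept, Drop}, the match expression pu(m, a) contains no primitive x for which the ternary matcher returns Unknown on some packet (i.e., all primitives occurring in pu(m,a) are 'known' to the matcher). -/
import Mathlib


inductive FAction (χ : Type) where
  | accept | drop | reject | log | empty | call (c : χ) | ret
deriving DecidableEq

inductive FState where
  | undecided | allow | deny
deriving DecidableEq

inductive MExpr (X : Type) where
  | prim (x : X) | neg (m : MExpr X) | and (m₁ m₂ : MExpr X) | tt
deriving DecidableEq

/-- Lifting of a Boolean primitive matcher to match expressions. -/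
def mmatch {X P : Type} (γ : X → P → Bool) (p : P) : MExpr X → Bool
  | .prim x => γ x p
  | .neg m => !(mmatch γ p m)
  | .and m₁ m₂ => mmatch γ p m₁ && mmatch γ p m₂
  | .tt => true

abbrev Rule (X χ : Type) := MExpr X × FAction χ

/-- Big-step semantics for iptables. -/
inductive Bigstep {X P χ : Type} (Γ : χ → List (Rule X χ)) (γ : X → P → Bool) (p : P) :
    List (Rule X χ) → FState → FState → Prop where
  | skip (t) : Bigstep Γ γ p [] t t
  | accept {m} (h : mmatch γ p m = true) :
      Bigstep Γ γ p [(m, .accept)] .undecided .allow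
  | drop {m} (h : mmatch γ p m = true) :
      Bigstep Γ γ p [(m, .drop)] .undecided .deny
  | reject {m} (h : mmatch γ p m = true) :
      Bigstep Γ γ p [(m, .reject)] .undecided .deny
  | nomatch {m a} (h : mmatch γ p m = false) :
      Bigstep Γ γ p [(m, a)] .undecided .undecided
  | decision {rs t} (h : t ≠ FState.undecided) : Bigstep Γ γ p rs t t
  | seq {rs₁ rs₂ t t'} (h₁ : Bigstep Γ γ p rs₁ .undecided t)
      (h₂ : Bigstep Γ γ p rs₂ t t') : Bigstep Γ γ p (rs₁ ++ rs₂) .undecided t'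
  | callResult {m c t} (h : mmatch γ p m = true)
      (hc : Bigstep Γ γ p (Γ c) .undecided t) :
      Bigstep Γ γ p [(m, .call c)] .undecided t
  | callReturn {m c m' rs₁ rs₂} (h : mmatch γ p m = true)
      (hΓ : Γ c = rs₁ ++ (m', FAction.ret) :: rs₂) (h' : mmatch γ p m' = true)
      (hrs₁ : Bigstep Γ γ p rs₁ .undecided .undecided) :
      Bigstep Γ γ p [(m, .call c)] .undecided .undecided
  | log {m} (h : mmatch γ p m = true) :
      Bigstep Γ γ p [(m, .log)] .undecided .undecided
  | empty {m} (h : mmatch γ p m = true) :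
      Bigstep Γ γ p [(m, .empty)] .undecided .undecided

inductive Ternary where
  | tt | ff | uu
deriving DecidableEq

/-- Kleene conjunction. -/
def tand : Ternary → Ternary → Ternary
  | .tt, x => x
  | .ff, _ => .ff
  | .uu, .tt => .uu
  | .uu, .ff => .ff
  | .uu, .uu => .uu

/-- Kleene negation. -/
def tnot : Ternary → Ternary
  | .tt => .ff
  | .ff => .tt
  | .uu => .uu

def toTernary : Bool → Ternary
  | true => .tt
  | false => .ff

/-- Lifting of a ternary primitive matcher through Kleene logic. -/
def tmatch {X P : Type} (β : X → P → Ternary) (p : P) : MExpr X → Ternary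
  | .prim x => β x p
  | .neg m => tnot (tmatch β p m)
  | .and m₁ m₂ => tand (tmatch β p m₁) (tmatch β p m₂)
  | .tt => .tt

/-- Does a rule with match expression `m` and action `a` apply, resolving
`Unknown` match outcomes by the in-doubt tactic `α`? -/
def tMatches {X P χ : Type} (α : FAction χ → Bool) (β : X → P → Ternary) (p : P)
    (m : MExpr X) (a : FAction χ) : Bool :=
  match tmatch β p m with
  | .tt => true
  | .ff => false
  | .uu => α a

/-- The in-doubt-allow tactic: an `Unknown` match is resolved as matching
iff the action is `Accept`. -/
def inDoubtAllow {χ : Type} : FAction χ → Bool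
  | .accept => true
  | _ => false

/-- The in-doubt-deny tactic: an `Unknown` match is resolved as matching
iff the action is `Drop`. -/
def inDoubtDeny {χ : Type} : FAction χ → Bool
  | .drop => true
  | _ => false

/-- Approximate (ternary) big-step semantics over unfolded chains,
with in-doubt tactic `α`. -/
inductive ABigstep {X P χ : Type} (α : FAction χ → Bool) (β : X → P → Ternary) (p : P) :
    List (Rule X χ) → FState → FState → Prop where
  | skip (t) : ABigstep α β p [] t t
  | accept {m} (h : tMatches α β p m .accept = true) :
      ABigstep α β p [(m, .accept)] .undecided .allow
  | drop {m} (h : tMatches α β p m .drop = true) :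
      ABigstep α β p [(m, .drop)] .undecided .deny
  | nomatch {m a} (h : tMatches α β p m a = false) :
      ABigstep α β p [(m, a)] .undecided .undecided
  | decision {rs t} (h : t ≠ FState.undecided) : ABigstep α β p rs t t
  | seq {rs₁ rs₂ t t'} (h₁ : ABigstep α β p rs₁ .undecided t)
      (h₂ : ABigstep α β p rs₂ t t') : ABigstep α β p (rs₁ ++ rs₂) .undecided t'

/-- Remove unknown primitives (in-doubt-allow version), where `unk` marks
the primitives that are unknown to the ternary matcher. -/
def pu {X χ : Type} [DecidableEq X] (unk : X → Bool) : MExpr X → FAction χ → MExpr X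
  | .tt, _ => .tt
  | .prim x, a =>
      if unk x then (match a with | .accept => .tt | .drop => .neg .tt | _ => .prim x)
      else .prim x
  | .and m₁ m₂, a => .and (pu unk m₁ a) (pu unk m₂ a)
  | .neg (.prim x), a =>
      if unk x then (match a with | .accept => .tt | .drop => .neg .tt | _ => .neg (.prim x))
      else .neg (.prim x)
  | .neg (.neg m), a => pu unk m a
  | .neg .tt, _ => .neg .tt
  | .neg (.and m₁ m₂), a =>
      let p₁ := pu unk (.neg m₁) a
      let p₂ := pu unk (.neg m₂) a
      if p₁ = MExpr.tt then .tt
      else if p₂ = MExpr.tt then .tt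
      else if p₁ = MExpr.neg .tt then p₂
      else if p₂ = MExpr.neg .tt then p₁
      else .neg (.and (.neg p₁) (.neg p₂))
termination_by m _ => sizeOf m

/-- The primitives occurring in a match expression. -/
def prims {X : Type} : MExpr X → List X
  | .prim x => [x]
  | .neg m => prims m
  | .and m₁ m₂ => prims m₁ ++ prims m₂
  | .tt => []

/-- `pu` removes all unknown primitives: every primitive occurring in the
result is known to the matcher. -/
theorem pu_no_unknowns {X χ : Type} [DecidableEq X] (unk : X → Bool)
    (m : MExpr X) (a : FAction χ)
    (ha : a = FAction.accept ∨ a = FAction.drop) :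
    ∀ x ∈ prims (pu unk m a), unk x = false := by
  match m with
  | .tt => simp [pu, prims]
  | .prim x =>
      intro y hy
      by_cases h : unk x = true
      · rcases ha with rfl | rfl <;> simp [pu, h, prims] at hy
      · rcases ha with rfl | rfl <;>
        · simp [pu, h, prims] at hy
          subst hy
          simpa using h
  | .and m₁ m₂ =>
      intro y hy
      simp only [pu, prims, List.mem_append] at hy
      rcases hy with h | h
      · exact pu_no_unknowns unk m₁ a ha y h
      · exact pu_no_unknowns unk m₂ a ha y h
  | .neg (.prim x) =>
      intro y hy
      by_cases h : unk x = true
      · rcases ha with rfl | rfl <;> simp [pu, h, prims] at hy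
      · rcases ha with rfl | rfl <;>
        · simp [pu, h, prims] at hy
          subst hy
          simpa using h
  | .neg (.neg m') =>
      intro y hy
      rw [pu] at hy
      exact pu_no_unknowns unk m' a ha y hy
  | .neg .tt => simp [pu, prims]
  | .neg (.and m₁ m₂) =>
      intro y hy
      have h1 := pu_no_unknowns unk (.neg m₁) a ha
      have h2 := pu_no_unknowns unk (.neg m₂) a ha
      rw [pu] at hy
      split at hy
      · simp [prims] at hy
      · split at hy
        · simp [prims] at hy
        · split at hy
          · exact h2 y hy
          · split at hy
            · exact h1 y hy
            · simp only [prims, List.mem_append] at hy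
              rcases hy with h | h
              · exact h1 y h
              · exact h2 y h
termination_by sizeOf m
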